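/- arXiv:1105.3816 — 2 statements merged into one kernel-verified Lean document; each statement's English description precedes it below -/
import Mathlib

section
/- Let f1, f3 be balanced columns of length n1, with f1 having q1 levels and f3 having q3 levels, and let f2, f4 be balanced columns of length n2, with f2 having q1 levels and f4 having q4 levels, where f1 and f2 both have q1 levels over A = Z/q1. Define h2 of length n1n2 by h2_{(i,j)} = q4·f3_i + f4_j (q3q4 levels). Then f_NOD(f1 ⊕_A f2, h2) ≤ q1·f_NOD(f1,f3)·f_NOD(f2,f4) + min{(n2²/q4)·f_NOD(f1,f3), (n1²/q3)·f_NOD(f2,f4)}, with equality if and only if f1 is orthogonal to f3 or f2 is orthogonal to f4. -/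
open Finset

def mixLevel {q1 q2 : ℕ} (a : Fin q1) (b : Fin q2) : Fin (q1 * q2) :=
  ⟨q2 * a.val + b.val, by
    have hb : b.val < q2 := b.isLt
    have ha : a.val + 1 ≤ q1 := a.isLt
    calc q2 * a.val + b.val < q2 * a.val + q2 := by omega
      _ = q2 * (a.val + 1) := by ring
      _ ≤ q2 * q1 := Nat.mul_le_mul_left q2 ha
      _ = q1 * q2 := Nat.mul_comm q2 q1⟩

def fNOD {I α β : Type*} [Fintype I] [Fintype α] [Fintype β]
    [DecidableEq α] [DecidableEq β] (f : I → α) (g : I → β) : ℚ :=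
  ∑ a : α, ∑ b : β,
    (((Finset.univ.filter fun s => f s = a ∧ g s = b).card : ℚ)
      - (Fintype.card I : ℚ) / ((Fintype.card α : ℚ) * (Fintype.card β : ℚ))) ^ 2

def OrthCols {I α β : Type*} [Fintype I] [Fintype α] [Fintype β]
    [DecidableEq α] [DecidableEq β] (f : I → α) (g : I → β) : Prop :=
  ∀ (a : α) (b : β),
    ((Finset.univ.filter fun s => f s = a ∧ g s = b).card : ℚ)
      = (Fintype.card I : ℚ) / ((Fintype.card α : ℚ) * (Fintype.card β : ℚ))

/- ------------------ auxiliary lemmas ------------------ -/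

lemma fNOD_nonneg {I α β : Type*} [Fintype I] [Fintype α] [Fintype β]
    [DecidableEq α] [DecidableEq β] (f : I → α) (g : I → β) : 0 ≤ fNOD f g :=
  Finset.sum_nonneg fun _ _ => Finset.sum_nonneg fun _ _ => sq_nonneg _

lemma fNOD_eq_zero_iff {I α β : Type*} [Fintype I] [Fintype α] [Fintype β]
    [DecidableEq α] [DecidableEq β] (f : I → α) (g : I → β) :
    fNOD f g = 0 ↔ OrthCols f g := by
  unfold fNOD OrthCols
  rw [Finset.sum_eq_zero_iff_of_nonneg
    (fun _ _ => Finset.sum_nonneg fun _ _ => sq_nonneg _)]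
  constructor
  · intro h a b
    have h1 := h a (mem_univ a)
    rw [Finset.sum_eq_zero_iff_of_nonneg (fun _ _ => sq_nonneg _)] at h1
    have h2 := h1 b (mem_univ b)
    have h3 := pow_eq_zero_iff (n := 2) (by norm_num) |>.mp h2
    linarith [sub_eq_zero.mp h3]
  · intro h a _
    apply Finset.sum_eq_zero
    intro b _
    rw [h a b]
    ring

lemma mixLevel_injective {q3 q4 : ℕ} :
    Function.Injective (fun p : Fin q3 × Fin q4 => mixLevel p.1 p.2) := by
  rintro ⟨a, b⟩ ⟨a', b'⟩ h
  simp only [mixLevel, Fin.mk.injEq] at h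
  have hb := b.isLt
  have hb' := b'.isLt
  have hq4 : 0 < q4 := lt_of_le_of_lt (Nat.zero_le _) hb
  have e1 : (q4 * a.val + b.val) / q4 = a.val := by
    rw [Nat.mul_add_div hq4, Nat.div_eq_of_lt hb, Nat.add_zero]
  have e2 : (q4 * a'.val + b'.val) / q4 = a'.val := by
    rw [Nat.mul_add_div hq4, Nat.div_eq_of_lt hb', Nat.add_zero]
  have h1 : a.val = a'.val := by rw [← e1, h, e2]
  have h2 : b.val = b'.val := by rw [h1] at h; omega
  simp [Prod.ext_iff, Fin.ext_iff, h1, h2]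

lemma mixLevel_bijective {q3 q4 : ℕ} :
    Function.Bijective (fun p : Fin q3 × Fin q4 => mixLevel p.1 p.2) :=
  (Fintype.bijective_iff_injective_and_card _).mpr ⟨mixLevel_injective, by simp⟩

lemma count_fiber_sum_left {n : ℕ} {α β : Type*} [Fintype α] [Fintype β]
    [DecidableEq α] [DecidableEq β] (f : Fin n → α) (g : Fin n → β) (b : β) :
    ∑ a : α, (univ.filter fun i => f i = a ∧ g i = b).card
      = (univ.filter fun i => g i = b).card := by
  rw [Finset.card_eq_sum_card_fiberwise
    (f := f) (t := (univ : Finset α)) (fun x _ => mem_univ _)]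
  refine Finset.sum_congr rfl fun a _ => ?_
  rw [Finset.filter_filter]
  congr 1
  ext i
  simp [and_comm]

lemma balanced_cast {n q : ℕ} {α : Type*} [Fintype α] [DecidableEq α] (f : Fin n → α)
    (hq : q ≠ 0) (hcard : Fintype.card α = q)
    (hb : ∀ a : α, (univ.filter fun s => f s = a).card = n / q) :
    ((n / q : ℕ) : ℚ) = (n : ℚ) / (q : ℚ) := by
  have h := Finset.card_eq_sum_card_fiberwise
    (s := (univ : Finset (Fin n))) (t := (univ : Finset α)) (f := f) (fun x _ => mem_univ _)
  rw [card_univ, Fintype.card_fin] at h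
  have hsum : (∑ a : α, ((univ : Finset (Fin n)).filter fun x => f x = a).card)
      = q * (n / q) := by
    rw [Finset.sum_congr rfl (fun a _ => hb a), Finset.sum_const, card_univ, hcard,
      smul_eq_mul]
  have h2 : n = q * (n / q) := h.trans hsum
  rw [eq_div_iff (by exact_mod_cast hq)]
  exact_mod_cast (mul_comm q (n / q) ▸ h2).symm

lemma count_conv {n1 n2 q1 q3 q4 : ℕ} [NeZero q1]
    (f1 : Fin n1 → ZMod q1) (f2 : Fin n2 → ZMod q1)
    (f3 : Fin n1 → Fin q3) (f4 : Fin n2 → Fin q4)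
    (a : ZMod q1) (c : Fin q3) (d : Fin q4) :
    (univ.filter fun s : Fin n1 × Fin n2 =>
        f1 s.1 + f2 s.2 = a ∧ mixLevel (f3 s.1) (f4 s.2) = mixLevel c d).card
      = ∑ u : ZMod q1,
          (univ.filter fun i => f1 i = u ∧ f3 i = c).card
            * (univ.filter fun j => f2 j = a - u ∧ f4 j = d).card := by
  rw [Finset.card_eq_sum_card_fiberwise
    (f := fun s : Fin n1 × Fin n2 => f1 s.1) (t := (univ : Finset (ZMod q1)))
    (fun x _ => mem_univ _)]
  refine Finset.sum_congr rfl fun u _ => ?_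
  rw [Finset.filter_filter]
  have hiff : ∀ s : Fin n1 × Fin n2,
      ((f1 s.1 + f2 s.2 = a ∧ mixLevel (f3 s.1) (f4 s.2) = mixLevel c d) ∧ f1 s.1 = u)
        ↔ ((f1 s.1 = u ∧ f3 s.1 = c) ∧ (f2 s.2 = a - u ∧ f4 s.2 = d)) := by
    intro s
    constructor
    · rintro ⟨⟨hsum, hmix⟩, hu⟩
      have hp : (f3 s.1, f4 s.2) = (c, d) := mixLevel_injective (by exact hmix)
      rw [Prod.mk.injEq] at hp
      refine ⟨⟨hu, hp.1⟩, ?_, hp.2⟩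
      rw [← hsum, hu]
      abel
    · rintro ⟨⟨hu, h3⟩, h2, h4⟩
      refine ⟨⟨?_, by rw [h3, h4]⟩, hu⟩
      rw [hu, h2]
      abel
  rw [Finset.filter_congr (fun s _ => hiff s)]
  rw [show ((univ : Finset (Fin n1 × Fin n2)) = univ ×ˢ univ) from
    Finset.univ_product_univ.symm]
  rw [Finset.filter_product (fun i => f1 i = u ∧ f3 i = c)
    (fun j => f2 j = a - u ∧ f4 j = d), Finset.card_product]

lemma centered_sum {G : Type*} [Fintype G] (x y : G → ℚ) (m1 m2 : ℚ)
    (hx : ∑ u : G, x u = (Fintype.card G : ℚ) * m1)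
    (hy : ∑ u : G, y u = (Fintype.card G : ℚ) * m2) :
    ∑ u : G, (x u - m1) * (y u - m2)
      = (∑ u : G, x u * y u) - (Fintype.card G : ℚ) * (m1 * m2) := by
  have h : ∀ u, (x u - m1) * (y u - m2)
      = x u * y u - m1 * y u - m2 * x u + m1 * m2 := fun u => by ring
  rw [Finset.sum_congr rfl (fun u _ => h u), Finset.sum_add_distrib,
    Finset.sum_sub_distrib, Finset.sum_sub_distrib, ← Finset.mul_sum, ← Finset.mul_sum,
    hx, hy, Finset.sum_const, card_univ, nsmul_eq_mul]
  ring

lemma conv_sq_le {G : Type*} [AddCommGroup G] [Fintype G] (x y : G → ℚ) :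
    ∑ a : G, (∑ u : G, x u * y (a - u)) ^ 2
      ≤ (Fintype.card G : ℚ) * ((∑ u : G, x u ^ 2) * (∑ v : G, y v ^ 2)) := by
  have h2 : ∀ a : G, (∑ u : G, y (a - u) ^ 2) = ∑ v : G, y v ^ 2 := fun a =>
    Fintype.sum_bijective (fun u => a - u) (Equiv.subLeft a).bijective _ _ (fun u => rfl)
  calc ∑ a : G, (∑ u : G, x u * y (a - u)) ^ 2
      ≤ ∑ a : G, (∑ u : G, x u ^ 2) * (∑ v : G, y v ^ 2) := by
        refine Finset.sum_le_sum fun a _ => ?_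
        rw [← h2 a]
        exact Finset.sum_mul_sq_le_sq_mul_sq univ x fun u => y (a - u)
    _ = (Fintype.card G : ℚ) * ((∑ u : G, x u ^ 2) * (∑ v : G, y v ^ 2)) := by
        rw [Finset.sum_const, card_univ, nsmul_eq_mul]

/-- Core lemma: the Cauchy–Schwarz bound and vanishing under orthogonality. -/
lemma core_lemma {n1 n2 q1 q3 q4 : ℕ} [NeZero q1]
    (f1 : Fin n1 → ZMod q1) (f2 : Fin n2 → ZMod q1)
    (f3 : Fin n1 → Fin q3) (f4 : Fin n2 → Fin q4)
    (hb1 : ∀ a : ZMod q1, (Finset.univ.filter fun s => f1 s = a).card = n1 / q1)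
    (hb2 : ∀ a : ZMod q1, (Finset.univ.filter fun s => f2 s = a).card = n2 / q1)
    (hb3 : ∀ a : Fin q3, (Finset.univ.filter fun s => f3 s = a).card = n1 / q3)
    (hb4 : ∀ a : Fin q4, (Finset.univ.filter fun s => f4 s = a).card = n2 / q4) :
    fNOD (fun s : Fin n1 × Fin n2 => f1 s.1 + f2 s.2)
        (fun s : Fin n1 × Fin n2 => mixLevel (f3 s.1) (f4 s.2))
      ≤ (q1 : ℚ) * fNOD f1 f3 * fNOD f2 f4
    ∧ (OrthCols f1 f3 ∨ OrthCols f2 f4 →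
        fNOD (fun s : Fin n1 × Fin n2 => f1 s.1 + f2 s.2)
          (fun s : Fin n1 × Fin n2 => mixLevel (f3 s.1) (f4 s.2)) = 0) := by
  have hq1 : (0 : ℕ) < q1 := Nat.pos_of_ne_zero (NeZero.ne q1)
  rcases Nat.eq_zero_or_pos (q3 * q4) with hz | hpos
  · -- degenerate case: target type is empty
    haveI : IsEmpty (Fin (q3 * q4)) := by rw [hz]; exact Fin.isEmpty'
    have hF0 : fNOD (fun s : Fin n1 × Fin n2 => f1 s.1 + f2 s.2)
        (fun s : Fin n1 × Fin n2 => mixLevel (f3 s.1) (f4 s.2)) = 0 := by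
      unfold fNOD
      simp [Finset.univ_eq_empty]
    refine ⟨?_, fun _ => hF0⟩
    rw [hF0]
    have := fNOD_nonneg f1 f3
    have := fNOD_nonneg f2 f4
    positivity
  · have hq3 : 0 < q3 := by
      rcases Nat.eq_zero_or_pos q3 with h | h
      · subst h; simp at hpos
      · exact h
    have hq4 : 0 < q4 := by
      rcases Nat.eq_zero_or_pos q4 with h | h
      · subst h; simp at hpos
      · exact h
    -- rational counting functions
    set N1 : ZMod q1 → Fin q3 → ℚ :=
      fun u c => ((univ.filter fun i => f1 i = u ∧ f3 i = c).card : ℚ) with hN1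
    set N2 : ZMod q1 → Fin q4 → ℚ :=
      fun v d => ((univ.filter fun j => f2 j = v ∧ f4 j = d).card : ℚ) with hN2
    set m1 : ℚ := (n1 : ℚ) / ((q1 : ℚ) * (q3 : ℚ)) with hm1
    set m2 : ℚ := (n2 : ℚ) / ((q1 : ℚ) * (q4 : ℚ)) with hm2
    set D1 : ZMod q1 → Fin q3 → ℚ := fun u c => N1 u c - m1 with hD1
    set D2 : ZMod q1 → Fin q4 → ℚ := fun v d => N2 v d - m2 with hD2
    have hcardZ : (Fintype.card (ZMod q1) : ℚ) = (q1 : ℚ) := by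
      rw [ZMod.card]
    -- row sums
    have hrow1 : ∀ c : Fin q3, ∑ u : ZMod q1, N1 u c = (n1 : ℚ) / (q3 : ℚ) := by
      intro c
      have h := count_fiber_sum_left f1 f3 c
      have h2 : ∑ u : ZMod q1, N1 u c
          = ((univ.filter fun i => f3 i = c).card : ℚ) := by
        rw [hN1]
        beta_reduce
        exact_mod_cast congrArg (Nat.cast : ℕ → ℚ) h
      rw [h2, hb3 c, balanced_cast f3 (by omega) (by simp) hb3]
    have hrow2 : ∀ d : Fin q4, ∑ v : ZMod q1, N2 v d = (n2 : ℚ) / (q4 : ℚ) := by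
      intro d
      have h := count_fiber_sum_left f2 f4 d
      have h2 : ∑ v : ZMod q1, N2 v d
          = ((univ.filter fun j => f4 j = d).card : ℚ) := by
        rw [hN2]
        beta_reduce
        exact_mod_cast congrArg (Nat.cast : ℕ → ℚ) h
      rw [h2, hb4 d, balanced_cast f4 (by omega) (by simp) hb4]
    have hrow1' : ∀ c : Fin q3, ∑ u : ZMod q1, N1 u c
        = (Fintype.card (ZMod q1) : ℚ) * m1 := by
      intro c
      rw [hrow1 c, hcardZ, hm1]
      field_simp
    have hrow2' : ∀ d : Fin q4, ∑ v : ZMod q1, N2 v d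
        = (Fintype.card (ZMod q1) : ℚ) * m2 := by
      intro d
      rw [hrow2 d, hcardZ, hm2]
      field_simp
    -- the centered convolution identity
    have hE : ∀ (a : ZMod q1) (c : Fin q3) (d : Fin q4),
        ∑ u : ZMod q1, D1 u c * D2 (a - u) d
          = (∑ u : ZMod q1, N1 u c * N2 (a - u) d)
            - (Fintype.card (ZMod q1) : ℚ) * (m1 * m2) := by
      intro a c d
      have hyshift : ∑ u : ZMod q1, N2 (a - u) d
          = (Fintype.card (ZMod q1) : ℚ) * m2 := by
        rw [Fintype.sum_bijective (fun u : ZMod q1 => a - u)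
          (Equiv.subLeft a).bijective _ (fun v => N2 v d) (fun u => rfl)]
        exact hrow2' d
      exact centered_sum (fun u => N1 u c) (fun u => N2 (a - u) d) m1 m2 (hrow1' c) hyshift
    -- rewrite the mixed fNOD
    have hmean : (Fintype.card (Fin n1 × Fin n2) : ℚ)
        / ((Fintype.card (ZMod q1) : ℚ) * (Fintype.card (Fin (q3 * q4)) : ℚ))
        = (Fintype.card (ZMod q1) : ℚ) * (m1 * m2) := by
      rw [hcardZ, hm1, hm2]
      simp only [Fintype.card_prod, Fintype.card_fin]
      have hq1' : ((q1 : ℚ)) ≠ 0 := by exact_mod_cast (by omega : q1 ≠ 0)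
      have hq3' : ((q3 : ℚ)) ≠ 0 := by exact_mod_cast (by omega : q3 ≠ 0)
      have hq4' : ((q4 : ℚ)) ≠ 0 := by exact_mod_cast (by omega : q4 ≠ 0)
      push_cast
      field_simp
    have hFrw : fNOD (fun s : Fin n1 × Fin n2 => f1 s.1 + f2 s.2)
        (fun s : Fin n1 × Fin n2 => mixLevel (f3 s.1) (f4 s.2))
        = ∑ p : Fin q3 × Fin q4, ∑ a : ZMod q1,
            (∑ u : ZMod q1, D1 u p.1 * D2 (a - u) p.2) ^ 2 := by
      have hstep : fNOD (fun s : Fin n1 × Fin n2 => f1 s.1 + f2 s.2)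
          (fun s : Fin n1 × Fin n2 => mixLevel (f3 s.1) (f4 s.2))
          = ∑ a : ZMod q1, ∑ p : Fin q3 × Fin q4,
              (∑ u : ZMod q1, D1 u p.1 * D2 (a - u) p.2) ^ 2 := by
        unfold fNOD
        refine Finset.sum_congr rfl fun a _ => ?_
        rw [(Fintype.sum_bijective (fun p : Fin q3 × Fin q4 => mixLevel p.1 p.2)
          mixLevel_bijective _ _ (fun p => rfl)).symm]
        refine Finset.sum_congr rfl fun p _ => ?_
        have hcount : ((univ.filter fun s : Fin n1 × Fin n2 =>
            f1 s.1 + f2 s.2 = a ∧ mixLevel (f3 s.1) (f4 s.2) = mixLevel p.1 p.2).card : ℚ)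
            = ∑ u : ZMod q1, N1 u p.1 * N2 (a - u) p.2 := by
          rw [hN1, hN2]
          beta_reduce
          exact_mod_cast congrArg (Nat.cast : ℕ → ℚ)
            (count_conv f1 f2 f3 f4 a p.1 p.2)
        rw [hcount, hmean, ← hE a p.1 p.2]
      rw [hstep]
      exact Finset.sum_comm
    -- the two sub-fNODs
    have hF1 : fNOD f1 f3 = ∑ u : ZMod q1, ∑ c : Fin q3, (D1 u c) ^ 2 := by
      unfold fNOD
      simp only [Fintype.card_fin, ZMod.card, hD1, hN1, hm1]
    have hF2 : fNOD f2 f4 = ∑ v : ZMod q1, ∑ d : Fin q4, (D2 v d) ^ 2 := by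
      unfold fNOD
      simp only [Fintype.card_fin, ZMod.card, hD2, hN2, hm2]
    constructor
    · -- the Cauchy–Schwarz bound
      rw [hFrw, hF1, hF2]
      calc ∑ p : Fin q3 × Fin q4, ∑ a : ZMod q1,
            (∑ u : ZMod q1, D1 u p.1 * D2 (a - u) p.2) ^ 2
          ≤ ∑ p : Fin q3 × Fin q4, (Fintype.card (ZMod q1) : ℚ)
              * ((∑ u : ZMod q1, (D1 u p.1) ^ 2) * (∑ v : ZMod q1, (D2 v p.2) ^ 2)) := by
            exact Finset.sum_le_sum fun p _ =>
              conv_sq_le (fun u => D1 u p.1) (fun v => D2 v p.2)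
        _ = (q1 : ℚ) * (∑ u : ZMod q1, ∑ c : Fin q3, (D1 u c) ^ 2)
              * (∑ v : ZMod q1, ∑ d : Fin q4, (D2 v d) ^ 2) := by
            have e1 : (∑ u : ZMod q1, ∑ c : Fin q3, D1 u c ^ 2)
                = ∑ c : Fin q3, ∑ u : ZMod q1, D1 u c ^ 2 := Finset.sum_comm
            have e2 : (∑ v : ZMod q1, ∑ d : Fin q4, D2 v d ^ 2)
                = ∑ d : Fin q4, ∑ v : ZMod q1, D2 v d ^ 2 := Finset.sum_comm
            rw [Fintype.sum_prod_type]
            simp only [hcardZ]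
            rw [e1, e2, mul_assoc, Finset.sum_mul_sum]
            simp only [Finset.mul_sum]
        _ ≤ _ := le_refl _
    · -- orthogonality kills the mixed fNOD
      intro horth
      rw [hFrw]
      apply Finset.sum_eq_zero
      intro p _
      apply Finset.sum_eq_zero
      intro a _
      have hzero : ∑ u : ZMod q1, D1 u p.1 * D2 (a - u) p.2 = 0 := by
        rcases horth with h | h
        · apply Finset.sum_eq_zero
          intro u _
          have : D1 u p.1 = 0 := by
            rw [hD1]
            simp only [hN1, hm1]
            have := h u p.1
            simp only [Fintype.card_fin, ZMod.card] at this
            simp [this]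
          rw [this, zero_mul]
        · apply Finset.sum_eq_zero
          intro u _
          have : D2 (a - u) p.2 = 0 := by
            rw [hD2]
            simp only [hN2, hm2]
            have := h (a - u) p.2
            simp only [Fintype.card_fin, ZMod.card] at this
            simp [this]
          rw [this, mul_zero]
      rw [hzero]
      ring
  

/-- bound on `f_NOD` of a Kronecker sum over `ZMod q1` and a
mixed `(q3 q4)`-level column, with equality iff `f1 ⊥ f3` or `f2 ⊥ f4`. -/
theorem fNOD_kronecker_sum_mixed_le {n1 n2 q1 q3 q4 : ℕ} [NeZero q1]
    (f1 : Fin n1 → ZMod q1) (f2 : Fin n2 → ZMod q1)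
    (f3 : Fin n1 → Fin q3) (f4 : Fin n2 → Fin q4)
    (hb1 : ∀ a : ZMod q1, (Finset.univ.filter fun s => f1 s = a).card = n1 / q1)
    (hb2 : ∀ a : ZMod q1, (Finset.univ.filter fun s => f2 s = a).card = n2 / q1)
    (hb3 : ∀ a : Fin q3, (Finset.univ.filter fun s => f3 s = a).card = n1 / q3)
    (hb4 : ∀ a : Fin q4, (Finset.univ.filter fun s => f4 s = a).card = n2 / q4) :
    fNOD (fun s : Fin n1 × Fin n2 => f1 s.1 + f2 s.2)
        (fun s : Fin n1 × Fin n2 => mixLevel (f3 s.1) (f4 s.2))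
      ≤ (q1 : ℚ) * fNOD f1 f3 * fNOD f2 f4
        + min ((n2 : ℚ) ^ 2 / (q4 : ℚ) * fNOD f1 f3)
            ((n1 : ℚ) ^ 2 / (q3 : ℚ) * fNOD f2 f4) ∧
    (fNOD (fun s : Fin n1 × Fin n2 => f1 s.1 + f2 s.2)
        (fun s : Fin n1 × Fin n2 => mixLevel (f3 s.1) (f4 s.2))
      = (q1 : ℚ) * fNOD f1 f3 * fNOD f2 f4
        + min ((n2 : ℚ) ^ 2 / (q4 : ℚ) * fNOD f1 f3)
            ((n1 : ℚ) ^ 2 / (q3 : ℚ) * fNOD f2 f4)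
      ↔ OrthCols f1 f3 ∨ OrthCols f2 f4) := by
  obtain ⟨hcs, hzero⟩ := core_lemma f1 f2 f3 f4 hb1 hb2 hb3 hb4
  have hF1nn := fNOD_nonneg f1 f3
  have hF2nn := fNOD_nonneg f2 f4
  have hAnn : 0 ≤ (n2 : ℚ) ^ 2 / (q4 : ℚ) * fNOD f1 f3 :=
    mul_nonneg (div_nonneg (by positivity) (by positivity)) hF1nn
  have hBnn : 0 ≤ (n1 : ℚ) ^ 2 / (q3 : ℚ) * fNOD f2 f4 :=
    mul_nonneg (div_nonneg (by positivity) (by positivity)) hF2nn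
  have hminnn : 0 ≤ min ((n2 : ℚ) ^ 2 / (q4 : ℚ) * fNOD f1 f3)
      ((n1 : ℚ) ^ 2 / (q3 : ℚ) * fNOD f2 f4) := le_min hAnn hBnn
  refine ⟨le_trans hcs (le_add_of_nonneg_right hminnn), ?_, ?_⟩
  · -- equality implies orthogonality
    intro heq
    have hmin0 : min ((n2 : ℚ) ^ 2 / (q4 : ℚ) * fNOD f1 f3)
        ((n1 : ℚ) ^ 2 / (q3 : ℚ) * fNOD f2 f4) = 0 := by
      have := hcs
      rw [heq] at this
      linarith
    have hor : (n2 : ℚ) ^ 2 / (q4 : ℚ) * fNOD f1 f3 = 0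
        ∨ (n1 : ℚ) ^ 2 / (q3 : ℚ) * fNOD f2 f4 = 0 := by
      rcases min_choice ((n2 : ℚ) ^ 2 / (q4 : ℚ) * fNOD f1 f3)
        ((n1 : ℚ) ^ 2 / (q3 : ℚ) * fNOD f2 f4) with h | h
      · left; rw [← h, hmin0]
      · right; rw [← h, hmin0]
    rcases hor with h | h
    · rcases mul_eq_zero.mp h with h' | h'
      · -- n2 = 0 or q4 = 0
        rcases div_eq_zero_iff.mp h' with h2 | h2
        · have hn2 : n2 = 0 := by exact_mod_cast pow_eq_zero_iff (n := 2) (by norm_num) |>.mp h2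
          right
          subst hn2
          intro a b
          simp
        · have hq4 : q4 = 0 := by exact_mod_cast h2
          right
          subst hq4
          intro a b
          exact b.elim0
      · exact Or.inl ((fNOD_eq_zero_iff f1 f3).mp h')
    · rcases mul_eq_zero.mp h with h' | h'
      · rcases div_eq_zero_iff.mp h' with h2 | h2
        · have hn1 : n1 = 0 := by exact_mod_cast pow_eq_zero_iff (n := 2) (by norm_num) |>.mp h2
          left
          subst hn1
          intro a b
          simp
        · have hq3 : q3 = 0 := by exact_mod_cast h2
          left
          subst hq3
          intro a b
          exact b.elim0
      · exact Or.inr ((fNOD_eq_zero_iff f2 f4).mp h')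
  · -- orthogonality implies equality
    intro hor
    rw [hzero hor]
    rcases hor with h | h
    · have h1 : fNOD f1 f3 = 0 := (fNOD_eq_zero_iff f1 f3).mpr h
      rw [h1, mul_zero, zero_mul, mul_zero, zero_add]
      exact (min_eq_left hBnn).symm
    · have h2 : fNOD f2 f4 = 0 := (fNOD_eq_zero_iff f2 f4).mpr h
      rw [h2, mul_zero, mul_zero, zero_add]
      exact (min_eq_right hAnn).symm
end

section
/- Let F1 (n1 rows, m1 columns, q1 levels, constant row-pair coincidence λ1) and F2 (n2 rows, m2 columns, q2 levels, constant row-pair coincidence λ2) be equidistant designs. Define the (q1q2)-level array H of size n1n2 × m1m2 with rows indexed by (i1,i2) and columns by (k1,k2), entries H[(i1,i2),(k1,k2)] = q2·F1[i1,k1] + F2[i2,k2]. Then the coincidence number between distinct rows (i1,i2) ≠ (j1,j2) of H equals: λ1·m2 if i1 ≠ j1, i2 = j2; λ2·m1 if i1 = j1, i2 ≠ j2; and λ1·λ2 if i1 ≠ j1 and i2 ≠ j2. Hence H has at most three coincidence values λ1 m2, λ2 m1, λ1 λ2. -/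
open Finset Matrix

lemma mixLevel_inj {q1 q2 : ℕ} (a a' : Fin q1) (b b' : Fin q2) :
    mixLevel a b = mixLevel a' b' ↔ a = a' ∧ b = b' := by
  constructor
  · intro h
    have h' : q2 * a.val + b.val = q2 * a'.val + b'.val := congrArg Fin.val h
    have hb : b.val < q2 := b.isLt
    have hb' : b'.val < q2 := b'.isLt
    have hav : a.val = a'.val := by
      rcases Nat.lt_trichotomy a.val a'.val with h1 | h1 | h1
      · exfalso; nlinarith [Nat.mul_le_mul_left q2 (Nat.succ_le_of_lt h1)]
      · exact h1
      · exfalso; nlinarith [Nat.mul_le_mul_left q2 (Nat.succ_le_of_lt h1)]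
    refine ⟨Fin.ext hav, Fin.ext ?_⟩
    rw [hav] at h'
    omega
  · rintro ⟨rfl, rfl⟩; rfl

/-- coincidence numbers of the `(q1 q2)`-level product design
`H[(i1,i2),(k1,k2)] = q2·F1[i1,k1] + F2[i2,k2]` of two equidistant designs
take the three values `λ1·m2`, `λ2·m1` and `λ1·λ2`. -/
theorem coincidence_numbers_of_mixed_product
    {n1 n2 m1 m2 q1 q2 : ℕ} (lam1 lam2 : ℕ)
    (F1 : Matrix (Fin n1) (Fin m1) (Fin q1))
    (hF1 : ∀ i j : Fin n1, i ≠ j →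
        (Finset.univ.filter fun k => F1 i k = F1 j k).card = lam1)
    (F2 : Matrix (Fin n2) (Fin m2) (Fin q2))
    (hF2 : ∀ i j : Fin n2, i ≠ j →
        (Finset.univ.filter fun k => F2 i k = F2 j k).card = lam2) :
    ∀ (i1 j1 : Fin n1) (i2 j2 : Fin n2), (i1, i2) ≠ (j1, j2) →
      (Finset.univ.filter fun kk : Fin m1 × Fin m2 =>
          mixLevel (F1 i1 kk.1) (F2 i2 kk.2) = mixLevel (F1 j1 kk.1) (F2 j2 kk.2)).card
        = if i1 = j1 then lam2 * m1
          else if i2 = j2 then lam1 * m2 else lam1 * lam2 := by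
  intro i1 j1 i2 j2 hne
  have hset : (Finset.univ.filter fun kk : Fin m1 × Fin m2 =>
      mixLevel (F1 i1 kk.1) (F2 i2 kk.2) = mixLevel (F1 j1 kk.1) (F2 j2 kk.2))
      = (Finset.univ.filter fun k => F1 i1 k = F1 j1 k) ×ˢ
        (Finset.univ.filter fun k => F2 i2 k = F2 j2 k) := by
    ext ⟨k1, k2⟩
    simp [mixLevel_inj, Finset.mem_product, and_comm]
  rw [hset, Finset.card_product]
  by_cases h1 : i1 = j1
  · subst h1
    have h2 : i2 ≠ j2 := by intro h; exact hne (by rw [h])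
    simp [hF2 _ _ h2, Nat.mul_comm]
  · by_cases h2 : i2 = j2
    · subst h2
      simp [h1, hF1 _ _ h1]
    · simp [h1, h2, hF1 _ _ h1, hF2 _ _ h2]
end
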